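/- arXiv:math/0503387 — 4 statements merged into one kernel-verified Lean document; each statement's English description precedes it below -/
import Mathlib

section
/- For γ, η smooth maps with η : ℝᵈ → ℝⁿ, γ : ℝⁿ → ℝᵐ, and η₁ : ℝᵈ → ℝⁿ, the difference quotient (γ∘(η + tη₁) − γ∘η)/t converges, as t → 0, to the map x ↦ dγ(η(x); η₁(x)) in the compact-open C^∞ topology on C^∞(ℝᵈ, ℝᵐ). -/
open Filter Topology Set

/-- Smooth maps `E → F` (arbitrary order of smoothness `C^∞`). -/
@[reducible] def SmoothFn (E F : Type*) [NormedAddCommGroup E] [NormedSpace ℝ E]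
    [NormedAddCommGroup F] [NormedSpace ℝ F] : Type _ :=
  {f : E → F // ContDiff ℝ (⊤ : ℕ∞) f}

variable {E F : Type*} [NormedAddCommGroup E] [NormedSpace ℝ E]
  [NormedAddCommGroup F] [NormedSpace ℝ F]

/-- The compact-open `C^∞` topology: uniform convergence of all derivatives on compacts. -/
noncomputable instance SmoothFn.topology : TopologicalSpace (SmoothFn E F) :=
  ⨅ k : ℕ, TopologicalSpace.induced
    (fun f : SmoothFn E F =>
      ContinuousMap.mk (iteratedFDeriv ℝ k f.1)
        (f.2.continuous_iteratedFDeriv (mod_cast le_top)))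
    ContinuousMap.compactOpen

instance : Add (SmoothFn E F) := ⟨fun f g => ⟨f.1 + g.1, f.2.add g.2⟩⟩
instance : Neg (SmoothFn E F) := ⟨fun f => ⟨-f.1, f.2.neg⟩⟩
instance : Zero (SmoothFn E F) := ⟨⟨0, contDiff_const⟩⟩
instance : Sub (SmoothFn E F) := ⟨fun f g => ⟨f.1 - g.1, f.2.sub g.2⟩⟩
instance : SMul ℝ (SmoothFn E F) := ⟨fun c f => ⟨c • f.1, f.2.const_smul c⟩⟩
instance : SMul ℕ (SmoothFn E F) := ⟨fun n f => ⟨n • f.1, f.2.const_smul n⟩⟩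
instance : SMul ℤ (SmoothFn E F) := ⟨fun n f => ⟨n • f.1, f.2.const_smul n⟩⟩

instance : AddCommGroup (SmoothFn E F) :=
  Function.Injective.addCommGroup (fun f : SmoothFn E F => f.1) Subtype.val_injective
    rfl (fun _ _ => rfl) (fun _ => rfl) (fun _ _ => rfl) (fun _ _ => rfl) (fun _ _ => rfl)

instance : Module ℝ (SmoothFn E F) :=
  Function.Injective.module ℝ
    { toFun := fun f : SmoothFn E F => f.1, map_zero' := rfl, map_add' := fun _ _ => rfl }
    Subtype.val_injective (fun _ _ => rfl)

section Test
variable (F : Type) [NormedAddCommGroup F] [NormedSpace ℝ F]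

/-- Compactly supported smooth functions on the line. -/
@[reducible] def TestFn : Type _ :=
  {f : ℝ → F // ContDiff ℝ (⊤ : ℕ∞) f ∧ HasCompactSupport f}

/-- Smooth functions supported in `[-N, N]`. -/
@[reducible] def StepFn (N : ℕ) : Type _ :=
  {f : ℝ → F // ContDiff ℝ (⊤ : ℕ∞) f ∧ tsupport f ⊆ Set.Icc (-(N:ℝ)) N}

variable {F}

def StepFn.toSmoothFn {N : ℕ} (f : StepFn F N) : SmoothFn ℝ F := ⟨f.1, f.2.1⟩

/-- Step spaces carry the (Fréchet) topology of uniform convergence of all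
derivatives (on compact sets, equivalently globally). -/
noncomputable instance StepFn.topology (N : ℕ) : TopologicalSpace (StepFn F N) :=
  TopologicalSpace.induced StepFn.toSmoothFn inferInstance

theorem StepFn.hasCompactSupport {N : ℕ} (f : StepFn F N) : HasCompactSupport f.1 :=
  IsCompact.of_isClosed_subset isCompact_Icc (isClosed_tsupport _) f.2.2

def StepFn.toTestFn {N : ℕ} (f : StepFn F N) : TestFn F :=
  ⟨f.1, f.2.1, f.hasCompactSupport⟩

instance : Add (TestFn F) := ⟨fun f g => ⟨f.1 + g.1, (f.2.1.add g.2.1), f.2.2.add g.2.2⟩⟩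
instance : Neg (TestFn F) :=
  ⟨fun f => ⟨-f.1, f.2.1.neg, f.2.2.mono (fun x hx => by
    simp only [Function.mem_support, Pi.neg_apply, neg_ne_zero] at hx ⊢; exact hx)⟩⟩
instance : Zero (TestFn F) := ⟨⟨0, contDiff_const, HasCompactSupport.zero⟩⟩
instance : Sub (TestFn F) :=
  ⟨fun f g => ⟨f.1 - g.1, f.2.1.sub g.2.1, by
    have : HasCompactSupport (-g.1) := g.2.2.mono (fun x hx => by
      simp only [Function.mem_support, Pi.neg_apply, neg_ne_zero] at hx ⊢; exact hx)
    simpa [sub_eq_add_neg] using f.2.2.add this⟩⟩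
instance : SMul ℝ (TestFn F) :=
  ⟨fun c f => ⟨c • f.1, f.2.1.const_smul c, f.2.2.smul_left (f := fun _ => c)⟩⟩

instance : SMul ℕ (TestFn F) :=
  ⟨fun n f => ⟨n • f.1, f.2.1.const_smul n, f.2.2.mono (fun x hx => by
    simp only [Function.mem_support, Pi.smul_apply] at hx ⊢
    intro h; exact hx (by rw [h, smul_zero]))⟩⟩
instance : SMul ℤ (TestFn F) :=
  ⟨fun n f => ⟨n • f.1, f.2.1.const_smul n, f.2.2.mono (fun x hx => by
    simp only [Function.mem_support, Pi.smul_apply] at hx ⊢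
    intro h; exact hx (by rw [h, smul_zero]))⟩⟩

instance : AddCommGroup (TestFn F) :=
  Function.Injective.addCommGroup (fun f : TestFn F => f.1) Subtype.val_injective
    rfl (fun _ _ => rfl) (fun _ => rfl) (fun _ _ => rfl) (fun _ _ => rfl) (fun _ _ => rfl)

instance : Module ℝ (TestFn F) :=
  Function.Injective.module ℝ
    { toFun := fun f : TestFn F => f.1, map_zero' := rfl, map_add' := fun _ _ => rfl }
    Subtype.val_injective (fun _ _ => rfl)

/-- The locally convex direct limit topology on the space of test functions:
the finest locally convex vector topology making all inclusions of the
steps `C^∞_{[-N,N]}` continuous. -/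
noncomputable instance TestFn.topology : TopologicalSpace (TestFn F) :=
  sInf {t : TopologicalSpace (TestFn F) |
    @IsTopologicalAddGroup (TestFn F) t _ ∧ @ContinuousSMul ℝ (TestFn F) _ _ t ∧
    @LocallyConvexSpace ℝ (TestFn F) _ _ _ _ t ∧
    ∀ N : ℕ, Continuous[StepFn.topology N, t] (StepFn.toTestFn (F := F) (N := N))}

instance {N : ℕ} : Add (StepFn F N) :=
  ⟨fun f g => ⟨f.1 + g.1, f.2.1.add g.2.1,
    (closure_mono (Function.support_add _ _)).trans
      (by rw [closure_union]; exact union_subset f.2.2 g.2.2)⟩⟩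
instance {N : ℕ} : Neg (StepFn F N) :=
  ⟨fun f => ⟨-f.1, f.2.1.neg, by
    refine (closure_mono ?_).trans f.2.2
    intro x hx; simp only [Function.mem_support, Pi.neg_apply, neg_ne_zero] at hx ⊢; exact hx⟩⟩
instance {N : ℕ} : Zero (StepFn F N) :=
  ⟨⟨0, contDiff_const, by
    have : Function.support (0 : ℝ → F) = ∅ := Function.support_zero
    rw [tsupport, this, closure_empty]; exact empty_subset _⟩⟩
instance {N : ℕ} : Sub (StepFn F N) :=
  ⟨fun f g => ⟨f.1 - g.1, f.2.1.sub g.2.1, by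
    have h : Function.support (f.1 - g.1) ⊆ Function.support f.1 ∪ Function.support g.1 :=
      Function.support_sub _ _
    exact (closure_mono h).trans
      (by rw [closure_union]; exact union_subset f.2.2 g.2.2)⟩⟩

private theorem StepFn.smul_support {N : ℕ} (f : StepFn F N) {M : Type*} [Monoid M]
    [DistribMulAction M F] (c : M) :
    tsupport (c • f.1) ⊆ Set.Icc (-(N:ℝ)) N := by
  refine (closure_mono ?_).trans f.2.2
  intro x hx
  simp only [Function.mem_support, Pi.smul_apply] at hx ⊢
  intro h; exact hx (by rw [h, smul_zero])

instance {N : ℕ} : SMul ℝ (StepFn F N) :=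
  ⟨fun c f => ⟨c • f.1, f.2.1.const_smul c, f.smul_support c⟩⟩
instance {N : ℕ} : SMul ℕ (StepFn F N) :=
  ⟨fun n f => ⟨n • f.1, f.2.1.const_smul n, f.smul_support n⟩⟩
instance {N : ℕ} : SMul ℤ (StepFn F N) :=
  ⟨fun n f => ⟨n • f.1, f.2.1.const_smul n, f.smul_support n⟩⟩

instance {N : ℕ} : AddCommGroup (StepFn F N) :=
  Function.Injective.addCommGroup (fun f : StepFn F N => f.1) Subtype.val_injective
    rfl (fun _ _ => rfl) (fun _ => rfl) (fun _ _ => rfl) (fun _ _ => rfl) (fun _ _ => rfl)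

instance {N : ℕ} : Module ℝ (StepFn F N) :=
  Function.Injective.module ℝ
    { toFun := fun f : StepFn F N => f.1, map_zero' := rfl, map_add' := fun _ _ => rfl }
    Subtype.val_injective (fun _ _ => rfl)

end Test

universe u

/-- Michal–Bastiani `C^k` maps between (whole) topological vector spaces:
`f` is `C^{k+1}` if it is continuous, all two-sided directional derivatives
exist, and the resulting map `df : E × E → F` is `C^k`. -/
def IsCMB : (k : ℕ) → (E F : Type u) → [AddCommGroup E] → [Module ℝ E] →
    [TopologicalSpace E] → [AddCommGroup F] → [Module ℝ F] → [TopologicalSpace F] →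
    (E → F) → Prop
  | 0, _, _, _, _, _, _, _, _, f => Continuous f
  | (k+1), E, F, _, _, _, _, _, _, f => Continuous f ∧ ∃ df : E × E → F,
      (∀ p : E × E, Filter.Tendsto (fun t : ℝ => t⁻¹ • (f (p.1 + t • p.2) - f p.1))
        (nhdsWithin (0:ℝ) {(0:ℝ)}ᶜ) (nhds (df p)))
      ∧ IsCMB k (E × E) F df

/-- Michal–Bastiani smooth (`C^∞`) maps between topological vector spaces. -/
def IsSmoothMB (E F : Type u) [AddCommGroup E] [Module ℝ E] [TopologicalSpace E]
    [AddCommGroup F] [Module ℝ F] [TopologicalSpace F] (f : E → F) : Prop :=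
  ∀ k : ℕ, IsCMB k E F f

/-- The map `γ ↦ γ ∘ γ - γ(0)` on test functions. -/
noncomputable def selfComp (γ : TestFn ℝ) : TestFn ℝ :=
  ⟨fun x => γ.1 (γ.1 x) - γ.1 0,
   (γ.2.1.comp γ.2.1).sub contDiff_const,
   γ.2.2.mono (fun x hx => by
     simp only [Function.mem_support] at hx ⊢
     intro h0; exact hx (by rw [h0]; exact sub_self _))⟩

/-- The basic zero-neighbourhoods `V(k,e)` of the test function space. -/
def Vset (k : ℤ → ℕ) (e : ℤ → ℝ) : Set (TestFn ℝ) :=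
  {γ | ∀ n : ℤ, ∀ j ≤ k n, ∀ x ∈ Set.Icc ((n:ℝ) - 1/2) ((n:ℝ) + 1/2),
    |iteratedDeriv j γ.1 x| < e n}

/-! Put `f t y = γ (η y + t • η₁ y)`, a jointly smooth function of `(t, y)`. By symmetry of
second derivatives, `y`-derivatives commute with `∂ₜ`, so by the fundamental theorem of calculus
the `k`-th derivative of the difference quotient is `Q t = ∫₀¹ (D^k ∂ₜ f)(t s, ·) ds` for `t ≠ 0`.
The integrand is jointly continuous in `(t, y)`, hence so is `Q`, and currying turns joint
continuity into continuity of `t ↦ Q t` for the compact-open topology. Finally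
`Q 0 = D^k ∂ₜ f(0, ·)` and `∂ₜ f(0, y) = dγ(η y; η₁ y)`. -/

open scoped ContDiff

namespace SmoothFn

noncomputable def iteratedFDerivCM (k : ℕ) (f : SmoothFn E F) : C(E, E [×k]→L[ℝ] F) :=
  ⟨iteratedFDeriv ℝ k f.1, f.2.continuous_iteratedFDeriv (mod_cast le_top)⟩

theorem tendsto_nhds_iff {α : Type*} {l : Filter α} {f : α → SmoothFn E F} {g : SmoothFn E F} :
    Tendsto f l (𝓝 g) ↔
      ∀ k : ℕ, Tendsto (fun a => iteratedFDerivCM k (f a)) l (𝓝 (iteratedFDerivCM k g)) := by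
  simp only [nhds_iInf, tendsto_iInf, nhds_induced, tendsto_comap_iff]
  rfl

end SmoothFn

section Parametric

variable {P : Type*} [NormedAddCommGroup P] [NormedSpace ℝ P]

theorem ContDiff.uncurry_left {n : WithTop ℕ∞} {f : P → E → F} (p : P)
    (hf : ContDiff ℝ n (Function.uncurry f)) : ContDiff ℝ n (f p) :=
  hf.comp (contDiff_const.prodMk contDiff_id)

theorem ContDiff.uncurry_iteratedFDeriv {f : P → E → F} (hf : ContDiff ℝ ∞ (Function.uncurry f))
    (k : ℕ) : ContDiff ℝ ∞ (Function.uncurry fun p => iteratedFDeriv ℝ k (f p)) := by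
  induction k with
  | zero =>
    simp only [iteratedFDeriv_zero_eq_comp]
    exact (continuousMultilinearCurryFin0 ℝ E F).symm.contDiff.comp hf
  | succ k ih =>
    simp only [iteratedFDeriv_succ_eq_comp_left]
    refine (continuousMultilinearCurryLeftEquiv ℝ (fun _ : Fin (k + 1) => E) F).symm.contDiff.comp
      (ContDiff.fderiv (f := fun q : P × E => iteratedFDeriv ℝ k (f q.1)) ?_ contDiff_snd le_rfl)
    exact ih.comp ((contDiff_fst.comp contDiff_fst).prodMk contDiff_snd)

end Parametric

theorem ContDiff.uncurry_deriv_fst {f : ℝ → E → F} (hf : ContDiff ℝ ∞ (Function.uncurry f)) :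
    ContDiff ℝ ∞ (Function.uncurry fun t y => deriv (fun s => f s y) t) :=
  ContDiff.fderiv_apply (f := fun (p : ℝ × E) s => f s p.2)
    (hf.comp (contDiff_snd.prodMk (contDiff_snd.comp contDiff_fst))) contDiff_fst contDiff_const
    le_rfl

theorem hasDerivAt_fderiv_of_contDiff_uncurry {f : ℝ → E → F}
    (hf : ContDiff ℝ 2 (Function.uncurry f)) (t : ℝ) (x : E) :
    HasDerivAt (fun s => fderiv ℝ (f s) x) (fderiv ℝ (fun y => deriv (fun s => f s y) t) x) t := by
  set Φ := Function.uncurry f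
  have hΦ : ∀ p, HasFDerivAt Φ (fderiv ℝ Φ p) p := fun p =>
    (hf.differentiable (by simp) p).hasFDerivAt
  set S := fderiv ℝ (fderiv ℝ Φ) (t, x)
  have hS : HasFDerivAt (fderiv ℝ Φ) S (t, x) :=
    ((hf.fderiv_right (m := 1) (by norm_num)).differentiable one_ne_zero (t, x)).hasFDerivAt
  have hsymm : IsSymmSndFDerivAt ℝ Φ (t, x) := hf.contDiffAt.isSymmSndFDerivAt (by simp)
  have slice_x : ∀ s, fderiv ℝ (f s) x = (fderiv ℝ Φ (s, x)).comp (.inr ℝ ℝ E) := fun s =>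
    ((hΦ (s, x)).comp x (hasFDerivAt_prodMk_right s x)).fderiv
  have slice_t : ∀ y, deriv (fun s => f s y) t = fderiv ℝ Φ (t, y) (1, 0) := fun y => by
    have h := ((hΦ (t, y)).comp t (hasFDerivAt_prodMk_left t y)).hasDerivAt
    simp [show deriv (fun s => f s y) t = _ from h.deriv]
  have hL : HasDerivAt (fun s => (fderiv ℝ Φ (s, x)).comp (.inr ℝ ℝ E))
      ((S (1, 0)).comp (.inr ℝ ℝ E)) t :=
    (((ContinuousLinearMap.compL ℝ E (ℝ × E) F).flip (.inr ℝ ℝ E)).hasFDerivAt.comp_hasDerivAt t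
      (hS.comp t (hasFDerivAt_prodMk_left t x)).hasDerivAt).congr_deriv (by simp)
  have hR : HasFDerivAt (fun y => fderiv ℝ Φ (t, y) (1, 0))
      ((ContinuousLinearMap.apply ℝ F ((1 : ℝ), (0 : E))).comp (S.comp (.inr ℝ ℝ E))) x :=
    (ContinuousLinearMap.apply ℝ F ((1 : ℝ), (0 : E))).hasFDerivAt.comp x
      (hS.comp x (hasFDerivAt_prodMk_right t x))
  simp only [slice_x, slice_t, hR.fderiv]
  convert hL using 1
  ext v
  simpa using hsymm (0, v) (1, 0)

theorem hasDerivAt_iteratedFDeriv_of_contDiff_uncurry {f : ℝ → E → F}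
    (hf : ContDiff ℝ ∞ (Function.uncurry f)) (k : ℕ) (t : ℝ) (x : E) :
    HasDerivAt (fun s => iteratedFDeriv ℝ k (f s) x)
      (iteratedFDeriv ℝ k (fun y => deriv (fun s => f s y) t) x) t := by
  induction k generalizing t x with
  | zero =>
    have hx : HasDerivAt (fun s => f s x) (deriv (fun s => f s x) t) t :=
      ((hf.comp (contDiff_id.prodMk contDiff_const)).differentiable (by simp) t).hasDerivAt
    exact (continuousMultilinearCurryFin0 ℝ E F).symm.hasFDerivAt.comp_hasDerivAt t hx
  | succ k ih =>
    have hcomm : (fun y => deriv (fun s => iteratedFDeriv ℝ k (f s) y) t) =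
        iteratedFDeriv ℝ k (fun y => deriv (fun s => f s y) t) :=
      funext fun y => (ih t y).deriv
    simp only [iteratedFDeriv_succ_eq_comp_left, Function.comp_apply, ← hcomm]
    exact (continuousMultilinearCurryLeftEquiv ℝ (fun _ : Fin (k + 1) => E) F).symm.hasFDerivAt
      |>.comp_hasDerivAt t (hasDerivAt_fderiv_of_contDiff_uncurry
        ((hf.uncurry_iteratedFDeriv k).of_le (by norm_cast)) t x)

theorem inv_smul_sub_eq_integral_deriv_comp_mul [CompleteSpace F] {B B' : ℝ → F}
    (hB : ∀ s, HasDerivAt B (B' s) s) (hB' : Continuous B') {t : ℝ} (ht : t ≠ 0) :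
    t⁻¹ • (B t - B 0) = ∫ s in (0 : ℝ)..1, B' (t * s) := by
  rw [intervalIntegral.integral_comp_mul_left (fun s => B' s) ht, mul_zero, mul_one,
    intervalIntegral.integral_eq_sub_of_hasDerivAt (fun s _ => hB s) (hB'.intervalIntegrable _ _)]

theorem SmoothFn.tendsto_inv_smul_sub [CompleteSpace F] {f : ℝ → E → F}
    (hf : ContDiff ℝ ∞ (Function.uncurry f)) :
    Tendsto
      (fun t : ℝ => t⁻¹ • ((⟨f t, hf.uncurry_left t⟩ : SmoothFn E F) - ⟨f 0, hf.uncurry_left 0⟩))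
      (𝓝[≠] 0) (𝓝 ⟨fun y => deriv (fun s => f s y) 0, hf.uncurry_deriv_fst.uncurry_left 0⟩) := by
  rw [SmoothFn.tendsto_nhds_iff]
  intro k
  set B' := fun t => iteratedFDeriv ℝ k (fun y => deriv (fun s => f s y) t)
  have hB' : Continuous (Function.uncurry B') :=
    (hf.uncurry_deriv_fst.uncurry_iteratedFDeriv k).continuous
  let Q : C(ℝ × E, E [×k]→L[ℝ] F) :=
    ⟨fun p => ∫ s in (0 : ℝ)..1, B' (p.1 * s) p.2,
      intervalIntegral.continuous_parametric_intervalIntegral_of_continuous'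
        (f := fun (p : ℝ × E) s => B' (p.1 * s) p.2)
        (hB'.comp (f := fun q : (ℝ × E) × ℝ => (q.1.1 * q.2, q.1.2)) (by fun_prop)) 0 1⟩
  have hQ0 : Q.curry 0 = SmoothFn.iteratedFDerivCM k
      ⟨fun y => deriv (fun s => f s y) 0, hf.uncurry_deriv_fst.uncurry_left 0⟩ := by
    ext1 y
    simp [Q, B', SmoothFn.iteratedFDerivCM]
  rw [← hQ0]
  refine ((Q.curry.continuous.tendsto 0).mono_left nhdsWithin_le_nhds).congr' ?_
  filter_upwards [self_mem_nhdsWithin] with t (ht : t ≠ 0)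
  ext1 y
  have hslice : ∀ s, ContDiffAt ℝ k (f s) y := fun s =>
    (contDiff_infty.1 (hf.uncurry_left s) k).contDiffAt
  change _ = iteratedFDeriv ℝ k (t⁻¹ • (f t - f 0)) y
  rw [iteratedFDeriv_const_smul_apply (f := f t - f 0) ((hslice t).sub (hslice 0)),
    iteratedFDeriv_sub_apply (hslice t) (hslice 0),
    inv_smul_sub_eq_integral_deriv_comp_mul (B' := fun s => B' s y)
      (fun s => hasDerivAt_iteratedFDeriv_of_contDiff_uncurry hf k s y)
      (hB'.comp (f := fun s => (s, y)) (by fun_prop)) ht]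
  rfl

/-- The difference quotient `(γ∘(η + tη₁) − γ∘η)/t` converges, as `t → 0`, to
`x ↦ dγ(η(x); η₁(x))` in the compact-open `C^∞` topology. -/
theorem difference_quotient_tendsto (d n m : ℕ)
    (γ : SmoothFn (Fin n → ℝ) (Fin m → ℝ)) (η η₁ : SmoothFn (Fin d → ℝ) (Fin n → ℝ)) :
    Filter.Tendsto
      (fun t : ℝ => t⁻¹ •
        ((⟨γ.1 ∘ (η.1 + t • η₁.1), γ.2.comp (η.2.add (η₁.2.const_smul t))⟩ :
            SmoothFn (Fin d → ℝ) (Fin m → ℝ)) -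
          (⟨γ.1 ∘ η.1, γ.2.comp η.2⟩ : SmoothFn (Fin d → ℝ) (Fin m → ℝ))))
      (nhdsWithin (0:ℝ) {(0:ℝ)}ᶜ)
      (nhds (⟨fun x => fderiv ℝ γ.1 (η.1 x) (η₁.1 x),
        ((γ.2.fderiv_right (by exact_mod_cast le_top)).comp η.2).clm_apply η₁.2⟩ : SmoothFn (Fin d → ℝ) (Fin m → ℝ))) := by
  have hf : ContDiff ℝ ∞ (Function.uncurry fun (t : ℝ) y => γ.1 (η.1 y + t • η₁.1 y)) :=
    γ.2.comp ((η.2.comp contDiff_snd).add (contDiff_fst.smul (η₁.2.comp contDiff_snd)))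
  convert SmoothFn.tendsto_inv_smul_sub hf using 4 with t x
  · rfl
  · exact Subtype.ext (funext fun y => by simp)
  · simpa using ((γ.2.differentiable (by simp) _).deriv_comp_add_smul
      (x := η.1 x) (y := η₁.1 x) (t := 0)).symm
end

section
/- There exists a zero-neighbourhood V in C_c^∞(ℝ) (for the locally convex inductive limit topology) such that for all sequences k = (k_n) ∈ ℕ₀^ℤ and e = (ε_n) ∈ (ℝ⁺)^ℤ, the image of the basic neighbourhood V(k, e) under the map γ ↦ γ∘γ − γ(0) is not contained in V. -/
open Filter Topology Set

variable {E F : Type*} [NormedAddCommGroup E] [NormedSpace ℝ E]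
  [NormedAddCommGroup F] [NormedSpace ℝ F]

universe u

/-!
The neighbourhood is the unit ball of the seminorm `p γ = sup_n sup_{|x - n| ≤ 1/2} |γ⁽ⁿ⁾(x)|`,
which is continuous on every step `C^∞_{[-N,N]}` because only the terms `n ≤ N` can be nonzero
there. A basic neighbourhood `V(k, e)` only controls `k₀` derivatives near `0`. With
`m = k₀ + 1`, the function `γ(x) = a sᵏ⁰ bump(x / s) + c ramp(x - m)`, a tall narrow bump at `0`
plus a ramp that equals `c (x - m)` near `m`, lies in `V(k, e)` for small `a`, `c` and all `s ≤ 1`.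
Near `m`, however, `γ ∘ γ` is the bump rescaled by `c / s`, so its `m`-th derivative there is of
size `a cᵐ / s`, which exceeds `1` once `s` is small.
-/

open scoped ContDiff
open Metric

section IteratedDeriv

variable {F : Type*} [NormedAddCommGroup F] [NormedSpace ℝ F] {f : ℝ → F}

theorem tsupport_iteratedDeriv_subset (n : ℕ) : tsupport (iteratedDeriv n f) ⊆ tsupport f := by
  rw [iteratedDeriv_eq_equiv_comp]
  exact (tsupport_comp_subset (map_zero _) _).trans (tsupport_iteratedFDeriv_subset n)

theorem iteratedDeriv_eq_zero_of_notMem_tsupport {x : ℝ} (hx : x ∉ tsupport f) (n : ℕ) :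
    iteratedDeriv n f x = 0 :=
  image_eq_zero_of_notMem_tsupport fun h => hx (tsupport_iteratedDeriv_subset n h)

theorem HasCompactSupport.iteratedDeriv (hf : HasCompactSupport f) (n : ℕ) :
    HasCompactSupport (iteratedDeriv n f) :=
  hf.of_isClosed_subset (isClosed_tsupport _) (tsupport_iteratedDeriv_subset n)

theorem ContDiff.exists_bound_iteratedDeriv (hf : ContDiff ℝ ∞ f)
    (hs : HasCompactSupport f) (K : ℕ) : ∃ M, ∀ j ≤ K, ∀ x, ‖iteratedDeriv j f x‖ ≤ M := by
  choose C hC using fun j => (hs.iteratedDeriv j).exists_bound_of_continuous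
    (hf.continuous_iteratedDeriv j (mod_cast le_top))
  refine ⟨∑ j ∈ Finset.range (K + 1), |C j|, fun j hj x => (hC j x).trans ?_⟩
  exact (le_abs_self _).trans (Finset.single_le_sum (f := fun j => |C j|)
    (fun _ _ => abs_nonneg _) (Finset.mem_range.2 (Nat.lt_succ_of_le hj)))

theorem ContDiff.exists_iteratedDeriv_ne_zero (hf : ContDiff ℝ ∞ f)
    (hs : HasCompactSupport f) (h : f ≠ 0) (m : ℕ) : ∃ t, iteratedDeriv m f t ≠ 0 := by
  induction m with
  | zero => simpa [Function.ne_iff] using h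
  | succ m ih =>
    obtain ⟨t, ht⟩ := ih
    by_contra! H
    have hdiff : Differentiable ℝ (iteratedDeriv m f) :=
      hf.differentiable_iteratedDeriv m (mod_cast ENat.natCast_lt_top m)
    have hconst : ∀ y, iteratedDeriv m f y = iteratedDeriv m f t := fun y =>
      is_const_of_deriv_eq_zero hdiff (fun z => by rw [← iteratedDeriv_succ]; exact H z) y t
    obtain ⟨y, hy⟩ := (Set.ne_univ_iff_exists_notMem _).1 (hs.iteratedDeriv m).ne_univ
    exact ht (hconst y ▸ image_eq_zero_of_notMem_tsupport hy)

theorem iteratedDeriv_const_smul_comp_const_mul {n : ℕ} (hf : ContDiff ℝ n f) (A b x : ℝ) :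
    iteratedDeriv n (fun y => A • f (b * y)) x = A • (b ^ n • iteratedDeriv n f (b * x)) := by
  rw [iteratedDeriv_fun_const_smul_field, congrFun (iteratedDeriv_comp_const_smul hf b) x]

end IteratedDeriv

section DiagSeminorm

variable {F : Type} [NormedAddCommGroup F] [NormedSpace ℝ F]

/-- The topology of `p` is one of the locally convex topologies in the infimum defining the
direct limit topology, so it is coarser than the latter. -/
theorem Seminorm.ball_zero_mem_nhds_testFn (p : Seminorm ℝ (TestFn F))
    (hp : ∀ (N : ℕ) (g₀ : StepFn F N),
      Tendsto (fun g : StepFn F N => p (g.toTestFn - g₀.toTestFn)) (𝓝 g₀) (𝓝 0))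
    {r : ℝ} (hr : 0 < r) : p.ball 0 r ∈ 𝓝 (0 : TestFn F) := by
  let q : SeminormFamily ℝ (TestFn F) Unit := fun _ => p
  let t : TopologicalSpace (TestFn F) := q.moduleFilterBasis.topology
  have ht : @WithSeminorms ℝ (TestFn F) Unit _ _ _ q t := ⟨rfl⟩
  have hle : TestFn.topology ≤ t := by
    refine sInf_le ⟨ht.topologicalAddGroup, ht.continuousSMul, ht.toLocallyConvexSpace,
      fun N => continuous_iff_continuousAt.2 fun g₀ => ?_⟩
    refine (ht.tendsto_nhds _ _).2 fun _ ε hε => ?_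
    exact (hp N g₀).eventually (gt_mem_nhds hε)
  let _ := t
  have := ht.topologicalAddGroup
  exact nhds_mono hle (p.ball_mem_nhds (ht.continuous_seminorm ()) hr)

noncomputable def iteratedDerivRestrict (n : ℕ) :
    TestFn F →ₗ[ℝ] C(Icc ((n : ℝ) - 1/2) (n + 1/2), F) where
  toFun γ := ⟨fun x => iteratedDeriv n γ.1 x,
    (γ.2.1.continuous_iteratedDeriv n (mod_cast le_top)).comp continuous_subtype_val⟩
  map_add' γ δ := by
    ext x
    exact iteratedDeriv_add (γ.2.1.contDiffAt.of_le (mod_cast le_top))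
      (δ.2.1.contDiffAt.of_le (mod_cast le_top))
  map_smul' c γ := by
    ext x
    exact iteratedDeriv_const_smul_field c γ.1

noncomputable def iteratedDerivSeminorm (n : ℕ) : Seminorm ℝ (TestFn F) :=
  (normSeminorm ℝ _).comp (iteratedDerivRestrict n)

theorem iteratedDerivSeminorm_apply (n : ℕ) (γ : TestFn F) :
    iteratedDerivSeminorm n γ = ‖iteratedDerivRestrict n γ‖ :=
  rfl

theorem iteratedDerivSeminorm_eq_zero {γ : TestFn F} {N n : ℕ}
    (hγ : tsupport γ.1 ⊆ Icc (-(N : ℝ)) N) (hn : N < n) : iteratedDerivSeminorm n γ = 0 := by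
  have hNn : (N : ℝ) + 1 ≤ n := by exact_mod_cast hn
  rw [iteratedDerivSeminorm_apply, norm_eq_zero]
  ext x
  exact iteratedDeriv_eq_zero_of_notMem_tsupport (fun h => by linarith [(hγ h).2, x.2.1]) n

theorem iteratedDerivSeminorm_le_sum {γ : TestFn F} {N : ℕ}
    (hγ : tsupport γ.1 ⊆ Icc (-(N : ℝ)) N) (n : ℕ) :
    iteratedDerivSeminorm n γ ≤ ∑ i ∈ Finset.range (N + 1), iteratedDerivSeminorm i γ := by
  rcases le_or_gt n N with hn | hn
  · exact Finset.single_le_sum (fun i _ => apply_nonneg _ γ)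
      (Finset.mem_range.2 (Nat.lt_succ_of_le hn))
  · rw [iteratedDerivSeminorm_eq_zero hγ hn]
    exact Finset.sum_nonneg fun i _ => apply_nonneg _ γ

theorem TestFn.exists_tsupport_subset_Icc (γ : TestFn F) :
    ∃ N : ℕ, tsupport γ.1 ⊆ Icc (-(N : ℝ)) N := by
  obtain ⟨r, hr⟩ := γ.2.2.isBounded.subset_closedBall 0
  refine ⟨⌈r⌉₊, hr.trans ?_⟩
  rw [Real.closedBall_eq_Icc, zero_sub, zero_add]
  exact Icc_subset_Icc (neg_le_neg (Nat.le_ceil r)) (Nat.le_ceil r)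

theorem bddAbove_range_iteratedDerivSeminorm :
    BddAbove (range (iteratedDerivSeminorm (F := F))) := by
  refine Seminorm.bddAbove_range_iff.2 fun γ => ?_
  obtain ⟨N, hN⟩ := γ.exists_tsupport_subset_Icc
  exact ⟨_, forall_mem_range.2 (iteratedDerivSeminorm_le_sum hN)⟩

noncomputable def diagSeminorm : Seminorm ℝ (TestFn F) :=
  ⨆ n, iteratedDerivSeminorm n

theorem diagSeminorm_apply (γ : TestFn F) : diagSeminorm γ = ⨆ n, iteratedDerivSeminorm n γ :=
  Seminorm.iSup_apply bddAbove_range_iteratedDerivSeminorm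

theorem diagSeminorm_le_sum {γ : TestFn F} {N : ℕ} (hγ : tsupport γ.1 ⊆ Icc (-(N : ℝ)) N) :
    diagSeminorm γ ≤ ∑ i ∈ Finset.range (N + 1), iteratedDerivSeminorm i γ := by
  rw [diagSeminorm_apply]
  exact ciSup_le (iteratedDerivSeminorm_le_sum hγ)

theorem norm_iteratedDeriv_le_diagSeminorm (γ : TestFn F) {n : ℕ} {x : ℝ}
    (hx : x ∈ Icc ((n : ℝ) - 1/2) (n + 1/2)) : ‖iteratedDeriv n γ.1 x‖ ≤ diagSeminorm γ := by
  calc ‖iteratedDeriv n γ.1 x‖ = ‖iteratedDerivRestrict n γ ⟨x, hx⟩‖ := rfl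
    _ ≤ iteratedDerivSeminorm n γ := (iteratedDerivRestrict n γ).norm_coe_le_norm _
    _ ≤ diagSeminorm γ := by
      rw [diagSeminorm_apply]
      exact le_ciSup (Seminorm.bddAbove_range_iff.1 bddAbove_range_iteratedDerivSeminorm γ) n

theorem continuous_iteratedDerivRestrict_toTestFn (n N : ℕ) :
    Continuous fun g : StepFn F N => iteratedDerivRestrict n g.toTestFn := by
  have hΦ : Continuous fun f : SmoothFn ℝ F => (⟨iteratedFDeriv ℝ n f.1,
      f.2.continuous_iteratedFDeriv (mod_cast le_top)⟩ : C(ℝ, _)) :=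
    continuous_iInf_dom continuous_induced_dom
  have hstep : Continuous (StepFn.toSmoothFn : StepFn F N → SmoothFn ℝ F) :=
    continuous_induced_dom
  have hrestr := (ContinuousMap.continuous_postcomp ⟨_,
    (ContinuousMultilinearMap.piFieldEquiv ℝ (Fin n) F).symm.continuous⟩).comp
    ((ContinuousMap.continuous_restrict (Icc ((n : ℝ) - 1/2) (n + 1/2))).comp (hΦ.comp hstep))
  convert hrestr using 2 with g
  ext x
  exact congrFun (iteratedDeriv_eq_equiv_comp (f := g.1)) x

theorem tendsto_diagSeminorm_toTestFn_sub {N : ℕ} (g₀ : StepFn F N) :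
    Tendsto (fun g : StepFn F N => diagSeminorm (g.toTestFn - g₀.toTestFn)) (𝓝 g₀) (𝓝 0) := by
  have hsum : Tendsto (fun g : StepFn F N =>
      ∑ i ∈ Finset.range (N + 1), iteratedDerivSeminorm i (g.toTestFn - g₀.toTestFn))
      (𝓝 g₀) (𝓝 0) := by
    rw [← Finset.sum_const_zero (s := Finset.range (N + 1))]
    refine tendsto_finsetSum _ fun i _ => ?_
    simp_rw [iteratedDerivSeminorm_apply, map_sub]
    simpa using ((continuous_iteratedDerivRestrict_toTestFn i N).tendsto g₀).sub_const
      (iteratedDerivRestrict i g₀.toTestFn) |>.norm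
  exact tendsto_of_tendsto_of_tendsto_of_le_of_le tendsto_const_nhds hsum
    (fun g => apply_nonneg _ _) (fun g => diagSeminorm_le_sum (g - g₀).2.2)

theorem diagSeminorm_ball_mem_nhds : (diagSeminorm (F := F)).ball 0 1 ∈ 𝓝 (0 : TestFn F) :=
  diagSeminorm.ball_zero_mem_nhds_testFn (fun _ => tendsto_diagSeminorm_toTestFn_sub) one_pos

end DiagSeminorm

section Probe

noncomputable def bump : ContDiffBump (0 : ℝ) := ⟨1/8, 1/4, by norm_num, by norm_num⟩

theorem bump_eq_one {t : ℝ} (ht : |t| ≤ 1/8) : bump t = 1 :=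
  bump.one_of_mem_closedBall (by rwa [mem_closedBall, Real.dist_eq, sub_zero])

theorem bump_eq_zero {t : ℝ} (ht : 1/4 ≤ |t|) : bump t = 0 := by
  rw [← Function.notMem_support, bump.support_eq, mem_ball, Real.dist_eq, sub_zero]
  exact ht.not_gt

noncomputable def ramp (t : ℝ) : ℝ := t * bump t

theorem contDiff_ramp : ContDiff ℝ ∞ ramp := contDiff_id.mul bump.contDiff

theorem hasCompactSupport_ramp : HasCompactSupport ramp := bump.hasCompactSupport.mul_left

theorem ramp_eq_self {t : ℝ} (ht : |t| ≤ 1/8) : ramp t = t := by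
  rw [ramp, bump_eq_one ht, mul_one]

theorem ramp_eq_zero {t : ℝ} (ht : 1/4 ≤ |t|) : ramp t = 0 := by
  rw [ramp, bump_eq_zero ht, mul_zero]

theorem tsupport_subset_closedBall_of_eq_zero {M : Type*} [Zero M] {f : ℝ → M} {a r : ℝ}
    (h : ∀ x, r < |x - a| → f x = 0) : tsupport f ⊆ closedBall a r :=
  closure_minimal (Function.support_subset_iff'.2 fun x hx =>
    h x (by rwa [mem_closedBall, Real.dist_eq, not_le] at hx)) isClosed_closedBall

noncomputable def scaledBump (A : ℝ) {s : ℝ} (hs : s ≠ 0) : TestFn ℝ :=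
  ⟨fun x => A * bump (s⁻¹ * x),
    contDiff_const.mul (bump.contDiff.comp (contDiff_const.mul contDiff_id)),
    (bump.hasCompactSupport.comp_smul (inv_ne_zero hs)).mul_left⟩

noncomputable def shiftedRamp (c m : ℝ) : TestFn ℝ :=
  ⟨fun x => c * ramp (x - m),
    contDiff_const.mul (contDiff_ramp.comp (contDiff_id.sub contDiff_const)),
    (hasCompactSupport_ramp.comp_homeomorph (Homeomorph.subRight m)).mul_left⟩

variable {A s c m x : ℝ}

theorem scaledBump_eq_zero (hs : s ≠ 0) (hx : |s| / 4 ≤ |x|) : (scaledBump A hs).1 x = 0 := by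
  refine mul_eq_zero_of_right A (bump_eq_zero ?_)
  rw [abs_mul, abs_inv, inv_mul_eq_div, le_div_iff₀ (abs_pos.2 hs)]
  linarith

theorem tsupport_scaledBump_subset (hs : s ≠ 0) :
    tsupport (scaledBump A hs).1 ⊆ closedBall 0 (|s| / 4) :=
  tsupport_subset_closedBall_of_eq_zero fun x hx =>
    scaledBump_eq_zero hs (by rw [sub_zero] at hx; exact hx.le)

theorem abs_iteratedDeriv_scaledBump_le (hs₀ : 0 < s) (hs₁ : s ≤ 1) {K : ℕ} {M : ℝ}
    (hM : ∀ j ≤ K, ∀ t, ‖iteratedDeriv j bump t‖ ≤ M) {j : ℕ} (hj : j ≤ K) (x : ℝ) :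
    |iteratedDeriv j (scaledBump A hs₀.ne').1 x| ≤ |A| * (s⁻¹ ^ K * M) := by
  have hpow : s⁻¹ ^ j ≤ s⁻¹ ^ K := pow_le_pow_right₀ (one_le_inv₀ hs₀ |>.2 hs₁) hj
  have hM' : |iteratedDeriv j bump (s⁻¹ * x)| ≤ M := hM j hj _
  rw [show (scaledBump A hs₀.ne').1 = fun x => A • bump (s⁻¹ * x) from rfl,
    iteratedDeriv_const_smul_comp_const_mul bump.contDiff, smul_eq_mul, smul_eq_mul, abs_mul,
    abs_mul, abs_of_pos (pow_pos (inv_pos.2 hs₀) j)]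
  gcongr

theorem shiftedRamp_eq (hx : |x - m| ≤ 1/8) : (shiftedRamp c m).1 x = c * (x - m) := by
  rw [← ramp_eq_self hx]; rfl

theorem shiftedRamp_eq_zero (hx : 1/4 ≤ |x - m|) : (shiftedRamp c m).1 x = 0 :=
  mul_eq_zero_of_right c (ramp_eq_zero hx)

theorem tsupport_shiftedRamp_subset : tsupport (shiftedRamp c m).1 ⊆ closedBall m (1/4) :=
  tsupport_subset_closedBall_of_eq_zero fun _ hx => shiftedRamp_eq_zero hx.le

theorem abs_iteratedDeriv_shiftedRamp_le {K : ℕ} {M : ℝ}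
    (hM : ∀ j ≤ K, ∀ t, ‖iteratedDeriv j ramp t‖ ≤ M) {j : ℕ} (hj : j ≤ K) (x : ℝ) :
    |iteratedDeriv j (shiftedRamp c m).1 x| ≤ |c| * M := by
  rw [show (shiftedRamp c m).1 = fun x => c * ramp (x - m) from rfl,
    iteratedDeriv_const_mul_field, iteratedDeriv_comp_sub_const, abs_mul]
  exact mul_le_mul_of_nonneg_left (hM j hj _) (abs_nonneg c)

end Probe

theorem Int.eq_of_mem_ball_of_mem_Icc {a n : ℤ} {x : ℝ} (ha : x ∈ ball (a : ℝ) (1/2))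
    (hn : x ∈ Icc ((n : ℝ) - 1/2) (n + 1/2)) : a = n := by
  rw [mem_ball, Real.dist_eq, abs_lt] at ha
  have h₁ : a < n + 1 := by exact_mod_cast (by linarith [hn.2] : (a : ℝ) < n + 1)
  have h₂ : n < a + 1 := by exact_mod_cast (by linarith [hn.1] : (n : ℝ) < a + 1)
  omega

theorem add_mem_Vset {k : ℤ → ℕ} {e : ℤ → ℝ} (he : ∀ n, 0 < e n) {u v : TestFn ℝ} {a b : ℤ}
    (hab : a ≠ b) (hu : tsupport u.1 ⊆ ball (a : ℝ) (1/2))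
    (hv : tsupport v.1 ⊆ ball (b : ℝ) (1/2))
    (hu' : ∀ j ≤ k a, ∀ x, |iteratedDeriv j u.1 x| < e a)
    (hv' : ∀ j ≤ k b, ∀ x, |iteratedDeriv j v.1 x| < e b) : u + v ∈ Vset k e := by
  intro n j hj x hx
  have hzero : ∀ {w : TestFn ℝ} {c : ℤ}, tsupport w.1 ⊆ ball (c : ℝ) (1/2) → c ≠ n →
      iteratedDeriv j w.1 x = 0 := fun hw hcn => iteratedDeriv_eq_zero_of_notMem_tsupport
    (fun h => hcn (Int.eq_of_mem_ball_of_mem_Icc (hw h) hx)) j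
  rw [show (u + v).1 = u.1 + v.1 from rfl,
    iteratedDeriv_add (u.2.1.contDiffAt.of_le (mod_cast le_top))
      (v.2.1.contDiffAt.of_le (mod_cast le_top))]
  by_cases han : a = n
  · subst han
    rw [hzero hv (Ne.symm hab), add_zero]
    exact hu' j hj x
  by_cases hbn : b = n
  · subst hbn
    rw [hzero hu hab, zero_add]
    exact hv' j hj x
  rw [hzero hu han, hzero hv hbn, add_zero, abs_zero]
  exact he n

section SelfComp

variable {A s c : ℝ} {m : ℕ}

theorem selfComp_scaledBump_add_shiftedRamp_eventuallyEq (hs : s ≠ 0) (hs₁ : |s| ≤ 1)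
    (hc : |c| ≤ 1) (hm : 1 ≤ m) {x : ℝ} (hx : |x - m| < 1/8) :
    (selfComp (scaledBump A hs + shiftedRamp c m)).1 =ᶠ[𝓝 x]
      fun y => A * bump (s⁻¹ * c * (y - m)) - (scaledBump A hs + shiftedRamp c m).1 0 := by
  have hm' : (1 : ℝ) ≤ m := by exact_mod_cast hm
  have hball : ball (m : ℝ) (1/8) ∈ 𝓝 x :=
    isOpen_ball.mem_nhds (by rwa [mem_ball, Real.dist_eq])
  filter_upwards [hball] with y hy
  rw [mem_ball, Real.dist_eq] at hy
  have hγy : (scaledBump A hs + shiftedRamp c m).1 y = c * (y - m) := by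
    rw [show (scaledBump A hs + shiftedRamp c m).1 y = _ + _ from rfl,
      scaledBump_eq_zero hs (by linarith [abs_le.1 hy.le, le_abs_self y]), zero_add,
      shiftedRamp_eq hy.le]
  have hcy : |c * (y - m)| ≤ 1/8 := by
    rw [abs_mul]; nlinarith [abs_nonneg c, abs_nonneg (y - m)]
  show (scaledBump A hs).1 _ + (shiftedRamp c m).1 _ - _ = _
  rw [hγy, shiftedRamp_eq_zero (by linarith [abs_le.1 hcy, neg_abs_le (c * (y - m) - m)]),
    add_zero, mul_assoc]
  rfl

theorem iteratedDeriv_selfComp_scaledBump_add_shiftedRamp (hs : s ≠ 0) (hs₁ : |s| ≤ 1)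
    (hc : |c| ≤ 1) (hm : 1 ≤ m) {x : ℝ} (hx : |x - m| < 1/8) :
    iteratedDeriv m (selfComp (scaledBump A hs + shiftedRamp c m)).1 x =
      A * ((s⁻¹ * c) ^ m * iteratedDeriv m bump (s⁻¹ * c * (x - m))) := by
  have hf : ContDiff ℝ m fun y : ℝ => A * bump (s⁻¹ * c * (y - m)) :=
    contDiff_const.mul (bump.contDiff.comp (contDiff_const.mul (contDiff_id.sub contDiff_const)))
  rw [(selfComp_scaledBump_add_shiftedRamp_eventuallyEq hs hs₁ hc hm hx).iteratedDeriv_eq,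
    iteratedDeriv_fun_sub hf.contDiffAt contDiffAt_const,
    iteratedDeriv_const, if_neg (by omega), sub_zero,
    congrFun (iteratedDeriv_comp_sub_const m (fun z => A * bump (s⁻¹ * c * z)) (m : ℝ)) x]
  exact iteratedDeriv_const_smul_comp_const_mul bump.contDiff A (s⁻¹ * c) (x - m)

end SelfComp

theorem exists_abs_le_iteratedDeriv_bump_ne_zero (m : ℕ) :
    ∃ t, |t| ≤ 1/4 ∧ iteratedDeriv m bump t ≠ 0 := by
  have hbump : (bump : ℝ → ℝ) ≠ 0 := fun h => by simpa [bump_eq_one] using congrFun h 0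
  obtain ⟨t, ht⟩ := bump.contDiff.exists_iteratedDeriv_ne_zero bump.hasCompactSupport hbump m
  refine ⟨t, ?_, ht⟩
  by_contra! h
  refine ht (iteratedDeriv_eq_zero_of_notMem_tsupport ?_ m)
  rwa [bump.tsupport_eq, mem_closedBall, Real.dist_eq, sub_zero, not_le]

theorem scaledBump_add_shiftedRamp_mem_Vset {k : ℤ → ℕ} {e : ℤ → ℝ} (he : ∀ n, 0 < e n)
    {A s c Mb Mr : ℝ} {m : ℕ} (hm : m ≠ 0) (hs : 0 < s) (hs₁ : s ≤ 1)
    (hMb : ∀ j ≤ k 0, ∀ t, ‖iteratedDeriv j bump t‖ ≤ Mb)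
    (hMr : ∀ j ≤ k m, ∀ t, ‖iteratedDeriv j ramp t‖ ≤ Mr)
    (hA : |A| * (s⁻¹ ^ k 0 * Mb) < e 0) (hc : |c| * Mr < e m) :
    scaledBump A hs.ne' + shiftedRamp c m ∈ Vset k e := by
  refine add_mem_Vset he (a := 0) (b := m) (by omega) ?_ ?_
    (fun j hj x => (abs_iteratedDeriv_scaledBump_le hs hs₁ hMb hj x).trans_lt hA)
    (fun j hj x => (abs_iteratedDeriv_shiftedRamp_le hMr hj x).trans_lt hc)
  · rw [Int.cast_zero]
    exact (tsupport_scaledBump_subset _).trans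
      (closedBall_subset_ball (by rw [abs_of_pos hs]; linarith))
  · rw [Int.cast_natCast]
    exact tsupport_shiftedRamp_subset.trans (closedBall_subset_ball (by norm_num))

theorem exists_abs_iteratedDeriv_selfComp_scaledBump_add_shiftedRamp_eq {a s c t : ℝ} {K : ℕ}
    (ha : 0 ≤ a) (hs : 0 < s) (hc₁ : c ≤ 1) (hsc : s ≤ c / 4) (ht : |t| ≤ 1/4) :
    ∃ x ∈ Icc (((K + 1 : ℕ) : ℝ) - 1/2) ((K + 1 : ℕ) + 1/2),
      |iteratedDeriv (K + 1) (selfComp (scaledBump (a * s ^ K) hs.ne' +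
        shiftedRamp c ((K + 1 : ℕ) : ℝ))).1 x|
        = a * c ^ (K + 1) * |iteratedDeriv (K + 1) bump t| / s := by
  have hq : 4 ≤ s⁻¹ * c := by rw [le_inv_mul_iff₀ hs]; linarith
  have hoff : |t / (s⁻¹ * c)| < 1/8 := by
    rw [abs_div, abs_of_pos (show 0 < s⁻¹ * c by linarith), div_lt_iff₀ (by linarith)]
    linarith
  refine ⟨(K + 1 : ℕ) + t / (s⁻¹ * c), by constructor <;> linarith [abs_lt.1 hoff], ?_⟩
  rw [iteratedDeriv_selfComp_scaledBump_add_shiftedRamp hs.ne' (by rw [abs_of_pos hs]; linarith)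
      (by rw [abs_of_pos (by linarith)]; exact hc₁) (by omega) (by rwa [add_sub_cancel_left]),
    add_sub_cancel_left, mul_div_cancel₀ _ (by positivity), abs_mul, abs_mul ((s⁻¹ * c) ^ _),
    abs_of_nonneg (by positivity), abs_of_pos (pow_pos (show 0 < s⁻¹ * c by linarith) _),
    ← mul_assoc, mul_pow, inv_pow, pow_succ, pow_succ]
  field_simp

theorem exists_mem_Vset_one_le_abs_iteratedDeriv_selfComp {k : ℤ → ℕ} {e : ℤ → ℝ}
    (he : ∀ n, 0 < e n) : ∃ γ ∈ Vset k e, ∃ n : ℕ, ∃ x ∈ Icc ((n : ℝ) - 1/2) (n + 1/2),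
      1 ≤ |iteratedDeriv n (selfComp γ).1 x| := by
  obtain ⟨Mb, hMb⟩ := bump.contDiff.exists_bound_iteratedDeriv bump.hasCompactSupport (k 0)
  obtain ⟨Mr, hMr⟩ :=
    contDiff_ramp.exists_bound_iteratedDeriv hasCompactSupport_ramp (k (k 0 + 1 : ℕ))
  have hMr₀ : 0 ≤ Mr := (norm_nonneg _).trans (hMr 0 (Nat.zero_le _) 0)
  obtain ⟨t, ht, hb⟩ := exists_abs_le_iteratedDeriv_bump_ne_zero (k 0 + 1)
  obtain ⟨a, ha, haM⟩ := exists_pos_mul_lt (he 0) Mb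
  obtain ⟨c₀, hc₀, hc₀M⟩ := exists_pos_mul_lt (he (k 0 + 1 : ℕ)) Mr
  obtain ⟨c, hc, hc₁, hcM⟩ : ∃ c, 0 < c ∧ c ≤ 1 ∧ Mr * c < e (k 0 + 1 : ℕ) :=
    ⟨min 1 c₀, lt_min one_pos hc₀, min_le_left _ _,
      (mul_le_mul_of_nonneg_left (min_le_right _ _) hMr₀).trans_lt hc₀M⟩
  obtain ⟨s, hs, hsc, hsB⟩ :
      ∃ s, 0 < s ∧ s ≤ c / 4 ∧ s ≤ a * c ^ (k 0 + 1) * |iteratedDeriv (k 0 + 1) bump t| :=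
    ⟨_, lt_min (by positivity) (by positivity), min_le_left _ _, min_le_right _ _⟩
  have hs₁ : s ≤ 1 := by linarith
  obtain ⟨x, hx, hval⟩ :=
    exists_abs_iteratedDeriv_selfComp_scaledBump_add_shiftedRamp_eq ha.le hs hc₁ hsc ht
  have hA : |a * s ^ k 0| * (s⁻¹ ^ k 0 * Mb) = Mb * a := by
    rw [abs_of_pos (mul_pos ha (pow_pos hs _)), inv_pow]
    field_simp
  refine ⟨scaledBump (a * s ^ k 0) hs.ne' + shiftedRamp c (k 0 + 1 : ℕ),
    scaledBump_add_shiftedRamp_mem_Vset he (by omega) hs hs₁ hMb hMr (hA ▸ haM)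
      (by rwa [abs_of_pos hc, mul_comm]), _, x, hx, ?_⟩
  rw [hval, le_div_iff₀ hs, one_mul]
  exact hsB

/-- There is a zero-neighbourhood `V` of `C_c^∞(ℝ)` such that for all sequences
`k : ℤ → ℕ` and `e : ℤ → ℝ⁺`, the image of the basic neighbourhood `V(k, e)`
under `γ ↦ γ∘γ − γ(0)` is not contained in `V`. -/
theorem exists_nhd_image_of_basic_not_subset :
    ∃ V ∈ nhds (0 : TestFn ℝ), ∀ (k : ℤ → ℕ) (e : ℤ → ℝ), (∀ n, 0 < e n) →
      ¬ (selfComp '' Vset k e ⊆ V) := by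
  refine ⟨diagSeminorm.ball 0 1, diagSeminorm_ball_mem_nhds, fun k e he hsub => ?_⟩
  obtain ⟨γ, hγ, n, x, hx, hlarge⟩ := exists_mem_Vset_one_le_abs_iteratedDeriv_selfComp he
  have hsmall : diagSeminorm (selfComp γ) < 1 := (Seminorm.mem_ball_zero _).1 (hsub ⟨γ, hγ, rfl⟩)
  have hbound := norm_iteratedDeriv_le_diagSeminorm (selfComp γ) hx
  rw [Real.norm_eq_abs] at hbound
  exact (hlarge.trans hbound).not_gt hsmall
end

section
/- The pointwise multiplication map μ : C^∞(ℝ, 𝕂) × C_c^∞(ℝ, 𝕂) → C_c^∞(ℝ, 𝕂), μ(γ, η) = γ·η, is discontinuous (jointly) at (0, 0) for the product of the compact-open C^∞ topology and the locally convex inductive limit topology. -/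
open Filter Topology Set

variable {E F : Type*} [NormedAddCommGroup E] [NormedSpace ℝ E]
  [NormedAddCommGroup F] [NormedSpace ℝ F]

universe u

/-!
A zero-neighbourhood `U` of `C^∞(ℝ, 𝕂)` only sees the derivatives of a function on some compact
set `K`, so it contains every multiple of a bump function `φ` supported off `K`. Scalar
multiplication on test functions is continuous, so `r • φ` lies in a given zero-neighbourhood `V`
for some small `r ≠ 0`; the product of `r⁻¹ • φ ∈ U` and `r • φ ∈ V` is `φ²`, of sup norm `1`.
Sup-norm balls are zero-neighbourhoods of test functions: the sup-norm topology is one of the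
locally convex topologies making all step inclusions continuous, hence finer than the limit one.
-/

open scoped BoundedContinuousFunction

theorem TendstoUniformlyOn.tendstoUniformly_of_eqOn_compl {ι α β : Type*} [UniformSpace β]
    {F : ι → α → β} {f : α → β} {l : Filter ι} {s : Set α} (h : TendstoUniformlyOn F f l s)
    (hF : ∀ i, EqOn (F i) f sᶜ) : TendstoUniformly F f l := fun u hu =>
  (h u hu).mono fun i hi x => by
    by_cases hx : x ∈ s
    · exact hi x hx
    · rw [hF i hx]
      exact refl_mem_uniformity hu

section SmoothFn

variable {E F : Type*} [NormedAddCommGroup E] [NormedSpace ℝ E]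
  [NormedAddCommGroup F] [NormedSpace ℝ F]

theorem SmoothFn.continuous_toContinuousMap :
    Continuous (fun f : SmoothFn E F => (⟨f.1, f.2.continuous⟩ : C(E, F))) := by
  have h₀ : Continuous (fun f : SmoothFn E F =>
      (⟨iteratedFDeriv ℝ 0 f.1, f.2.continuous_iteratedFDeriv (mod_cast le_top)⟩ :
        C(E, ContinuousMultilinearMap ℝ (fun _ : Fin 0 => E) F))) :=
    continuous_iInf_dom (i := 0) continuous_induced_dom
  convert (ContinuousMap.continuous_postcomp
    (continuousMultilinearCurryFin0 ℝ E F : C(_, F))).comp h₀ using 2 with f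
  ext x
  simp

theorem SmoothFn.tendsto_zero_of_eventually_disjoint {ι : Type*} {l : Filter ι}
    {g : ι → SmoothFn E F}
    (h : ∀ Q : Set E, IsCompact Q → ∀ᶠ i in l, Disjoint (tsupport (g i).1) Q) :
    Tendsto g l (𝓝 0) := by
  simp only [nhds_iInf, nhds_induced, tendsto_iInf, tendsto_comap_iff]
  intro k
  refine ContinuousMap.tendsto_iff_forall_isCompact_tendstoUniformlyOn.2 fun Q hQ => ?_
  intro u hu
  filter_upwards [h Q hQ] with i hi x hx
  have hgx : iteratedFDeriv ℝ k (g i).1 x = 0 :=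
    image_eq_zero_of_notMem_tsupport fun hx' =>
      hi.notMem_of_mem_right hx (tsupport_iteratedFDeriv_subset k hx')
  have h0 : iteratedFDeriv ℝ k (0 : SmoothFn E F).1 x = 0 := congrFun iteratedFDeriv_fun_zero x
  simp only [Function.comp_apply, ContinuousMap.coe_mk, hgx, h0]
  exact refl_mem_uniformity hu

theorem SmoothFn.exists_isCompact_forall_disjoint_mem {U : Set (SmoothFn E F)}
    (hU : U ∈ 𝓝 0) :
    ∃ K : Set E, IsCompact K ∧ ∀ f : SmoothFn E F, Disjoint (tsupport f.1) K → f ∈ U := by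
  by_contra! h
  choose g hgK hgU using fun K : TopologicalSpace.Compacts E => h K K.isCompact
  have hg : Tendsto g atTop (𝓝 0) := tendsto_zero_of_eventually_disjoint fun Q hQ =>
    (eventually_ge_atTop ⟨Q, hQ⟩).mono fun K hK => (hgK K).mono_right hK
  obtain ⟨K, hK⟩ := (hg.eventually_mem hU).exists
  exact hgU K hK

theorem exists_contDiff_hasCompactSupport_disjoint_eq_one (𝕂 : Type*) [RCLike 𝕂]
    [FiniteDimensional ℝ E] [Nontrivial E] {K : Set E} (hK : IsCompact K) :
    ∃ (φ : E → 𝕂) (c : E), ContDiff ℝ (⊤ : ℕ∞) φ ∧ HasCompactSupport φ ∧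
      Disjoint (tsupport φ) K ∧ φ c = 1 := by
  obtain ⟨c, hc⟩ := (Set.ne_univ_iff_exists_notMem K).1 hK.ne_univ
  obtain ⟨ψ, hψK, hψ, hψsmooth, -, hψc⟩ :=
    exists_contDiff_tsupport_subset (n := ⊤) (hK.isClosed.isOpen_compl.mem_nhds hc)
  refine ⟨fun x => (ψ x : 𝕂), c, (RCLike.ofRealCLM (K := 𝕂)).contDiff.comp hψsmooth,
    hψ.comp_left RCLike.ofReal_zero, ?_, by simp [hψc]⟩
  exact Set.subset_compl_iff_disjoint_right.1
    ((tsupport_comp_subset (RCLike.ofReal_zero (K := 𝕂)) ψ).trans hψK)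

end SmoothFn

section TestFn

variable {F : Type} [NormedAddCommGroup F] [NormedSpace ℝ F]

noncomputable def TestFn.toBCF : TestFn F →ₗ[ℝ] ℝ →ᵇ F where
  toFun f := .ofNormedAddCommGroup f.1 f.2.1.continuous _
    (f.2.2.exists_bound_of_continuous f.2.1.continuous).choose_spec
  map_add' _ _ := rfl
  map_smul' _ _ := rfl

theorem StepFn.apply_eq_zero_of_notMem {N : ℕ} (f : StepFn F N) {x : ℝ}
    (hx : x ∉ Icc (-(N : ℝ)) N) : f.1 x = 0 :=
  image_eq_zero_of_notMem_tsupport fun h => hx (f.2.2 h)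

theorem StepFn.continuous_toBCF_toTestFn (N : ℕ) :
    Continuous fun f : StepFn F N => TestFn.toBCF f.toTestFn := by
  refine continuous_iff_continuousAt.2 fun g => ?_
  have hunif := ContinuousMap.tendsto_iff_forall_isCompact_tendstoUniformlyOn.1
    ((SmoothFn.continuous_toContinuousMap.comp continuous_induced_dom).tendsto g)
    (Icc (-(N : ℝ)) N) isCompact_Icc
  refine BoundedContinuousFunction.tendsto_iff_tendstoUniformly.2
    (hunif.tendstoUniformly_of_eqOn_compl fun f x hx => ?_)
  show f.1 x = g.1 x
  rw [f.apply_eq_zero_of_notMem hx, g.apply_eq_zero_of_notMem hx]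

theorem TestFn.continuous_toBCF : Continuous (TestFn.toBCF (F := F)) :=
  continuous_iff_le_induced.2 <| sInf_le
    ⟨topologicalAddGroup_induced TestFn.toBCF, continuousSMul_induced TestFn.toBCF,
      LocallyConvexSpace.induced TestFn.toBCF,
      fun N => continuous_induced_rng.2 (StepFn.continuous_toBCF_toTestFn N)⟩

instance TestFn.continuousSMul : ContinuousSMul ℝ (TestFn F) :=
  continuousSMul_sInf fun _ ht => ht.2.1

end TestFn

/-- Pointwise multiplication `μ : C^∞(ℝ, 𝕂) × C_c^∞(ℝ, 𝕂) → C_c^∞(ℝ, 𝕂)` is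
jointly discontinuous at `(0, 0)`. -/
theorem mul_jointly_discontinuous (𝕂 : Type) [RCLike 𝕂] :
    ¬ ContinuousAt (fun p : SmoothFn ℝ 𝕂 × TestFn 𝕂 =>
      (⟨fun x => p.1.1 x * p.2.1 x, p.1.2.mul p.2.2.1, p.2.2.2.mul_left⟩ : TestFn 𝕂))
      (0, 0) := by
  intro hμ
  have hsup := (TestFn.continuous_toBCF.continuousAt.comp hμ).norm.preimage_mem_nhds
    (Iio_mem_nhds <| (norm_le_zero_iff.2 <|
      BoundedContinuousFunction.ext fun _ => mul_zero _).trans_lt one_pos)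
  obtain ⟨U, hU, V, hV, hUV⟩ := mem_nhds_prod_iff.1 hsup
  obtain ⟨K, hK, hKU⟩ := SmoothFn.exists_isCompact_forall_disjoint_mem hU
  obtain ⟨φ, c, hφ, hφ_supp, hφK, hφc⟩ :=
    exists_contDiff_hasCompactSupport_disjoint_eq_one 𝕂 hK
  have hφV : ∀ᶠ r : ℝ in 𝓝 0, r • (⟨φ, hφ, hφ_supp⟩ : TestFn 𝕂) ∈ V :=
    (tendsto_id.smul_const _).eventually_mem (by rwa [zero_smul])
  obtain ⟨r, hrV, hr⟩ :=
    ((hφV.filter_mono nhdsWithin_le_nhds).and (self_mem_nhdsWithin (s := {(0 : ℝ)}ᶜ))).exists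
  have hrU : r⁻¹ • (⟨φ, hφ⟩ : SmoothFn ℝ 𝕂) ∈ U :=
    hKU _ (hφK.mono_left (tsupport_smul_subset_right (fun _ => r⁻¹) φ))
  refine (hUV (Set.mk_mem_prod hrU hrV)).not_ge
    ((BoundedContinuousFunction.norm_coe_le_norm _ c).trans' ?_)
  show 1 ≤ ‖(r⁻¹ • φ c) * (r • φ c)‖
  rw [hφc, smul_mul_smul_comm, inv_mul_cancel₀ hr, one_smul, mul_one, norm_one]
end

section
/- Let E be a non-normable locally convex topological vector space over 𝕂. Then the evaluation (duality) pairing ev : E'_b × E → 𝕂, ev(λ, x) = λ(x), is discontinuous, where E'_b denotes the continuous dual equipped with the topology of uniform convergence on bounded sets. -/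
/-!
If the evaluation pairing is continuous at the origin, there are zero-neighbourhoods `V` in the
strong dual and `U` in `E` with `‖f x‖ ≤ 1` for `f ∈ V`, `x ∈ U`. Since `V` contains the polar of a
bounded set `S`, the set `U` lies in the bipolar of `S`. By Hahn–Banach the bipolar is contained in
the closed absolutely convex hull of `S ∪ {0}`, which in a locally convex space is again bounded.
So `U` is a bounded zero-neighbourhood and `E` is normable.
-/

open Bornology Filter Set Pointwise Topology
open scoped ComplexOrder

theorem RCLike.locallyConvexSpace_of_real (𝕂 E : Type*) [RCLike 𝕂] [AddCommMonoid E]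
    [Module 𝕂 E] [Module ℝ E] [IsScalarTower ℝ 𝕂 E] [TopologicalSpace E]
    [LocallyConvexSpace ℝ E] : LocallyConvexSpace 𝕂 E :=
  (locallyConvexSpace_iff_exists_convex_subset 𝕂 E).mpr fun x U hU ↦
    let ⟨S, hS, hSc, hSU⟩ := (locallyConvexSpace_iff_exists_convex_subset ℝ E).mp ‹_› x U hU
    ⟨S, hS, convex_RCLike_iff_convex_real.mpr hSc, hSU⟩

theorem Bornology.IsVonNBounded.closedAbsConvexHull {𝕜 E : Type*} [NontriviallyNormedField 𝕜]
    [PartialOrder 𝕜] [ZeroLEOneClass 𝕜] [AddCommGroup E] [Module 𝕜 E] [TopologicalSpace E]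
    [IsTopologicalAddGroup E] [ContinuousSMul 𝕜 E] [LocallyConvexSpace 𝕜 E] {s : Set E}
    (hs : IsVonNBounded 𝕜 s) : IsVonNBounded 𝕜 (closedAbsConvexHull 𝕜 s) := by
  intro W hW
  obtain ⟨V, ⟨hV, hV_closed, hV_abs⟩, hVW⟩ := (nhds_hasBasis_absConvex_closed 𝕜 E).mem_iff.mp hW
  filter_upwards [hs hV, eventually_ne_cobounded (0 : 𝕜)] with a hsV ha
  exact (closedAbsConvexHull_min hsV ⟨hV_abs.1.smul a, hV_abs.2.smul a⟩
    (hV_closed.smul_of_ne_zero ha)).trans (smul_set_mono hVW)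

theorem Balanced.norm_apply_lt_of_forall_re_apply_lt {𝕂 E : Type*} [RCLike 𝕂] [AddCommGroup E]
    [Module 𝕂 E] {s : Set E} (hs : Balanced 𝕂 s) (f : E →ₗ[𝕂] 𝕂) {u : ℝ}
    (hf : ∀ a ∈ s, RCLike.re (f a) < u) {a : E} (ha : a ∈ s) : ‖f a‖ < u := by
  obtain ⟨c, hc, hfa⟩ := RCLike.exists_norm_eq_mul_self (f a)
  have hre : RCLike.re (f (c • a)) = ‖f a‖ := by
    rw [map_smul, smul_eq_mul, ← hfa, RCLike.ofReal_re]
  exact hre ▸ hf _ (hs.smul_mem hc.le ha)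

theorem AbsConvex.polar_polar_subset {𝕂 E : Type*} [RCLike 𝕂] [AddCommGroup E] [Module 𝕂 E]
    [Module ℝ E] [IsScalarTower ℝ 𝕂 E] [TopologicalSpace E] [IsTopologicalAddGroup E]
    [ContinuousSMul 𝕂 E] [LocallyConvexSpace ℝ E] {s : Set E} (hs : AbsConvex 𝕂 s)
    (hs_closed : IsClosed s) (hs_zero : (0 : E) ∈ s) :
    (topDualPairing 𝕂 E).polar (StrongDual.polar 𝕂 s) ⊆ s := by
  intro x hx
  by_contra hxs
  obtain ⟨f, u, hfs, hfx⟩ := RCLike.geometric_hahn_banach_closed_point (𝕜 := 𝕂)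
    (convex_RCLike_iff_convex_real.mp hs.2) hs_closed hxs
  have hu : 0 < u := by simpa using hfs 0 hs_zero
  set g : StrongDual 𝕂 E := ((u⁻¹ : ℝ) : 𝕂) • f
  have hg : ∀ y, ‖g y‖ ≤ 1 ↔ ‖f y‖ ≤ u := fun y ↦ by
    simp only [g, smul_apply, smul_eq_mul, norm_mul, RCLike.norm_ofReal, abs_inv, abs_of_pos hu,
      inv_mul_le_iff₀ hu, mul_one]
  have hg_polar : g ∈ StrongDual.polar 𝕂 s := (StrongDual.mem_polar_iff 𝕂 s).mpr fun a ha ↦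
    (hg a).mpr (hs.1.norm_apply_lt_of_forall_re_apply_lt f.toLinearMap hfs ha).le
  exact (hfx.trans_le ((RCLike.re_le_norm _).trans ((hg x).mp (hx g hg_polar)))).false

theorem Bornology.IsVonNBounded.polar_polar {𝕂 E : Type*} [RCLike 𝕂] [AddCommGroup E]
    [Module 𝕂 E] [Module ℝ E] [IsScalarTower ℝ 𝕂 E] [TopologicalSpace E] [IsTopologicalAddGroup E]
    [ContinuousSMul 𝕂 E] [LocallyConvexSpace ℝ E] {s : Set E} (hs : IsVonNBounded 𝕂 s) :
    IsVonNBounded 𝕂 ((topDualPairing 𝕂 E).polar (StrongDual.polar 𝕂 s)) := by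
  have := RCLike.locallyConvexSpace_of_real 𝕂 E
  have hs_hull : s ⊆ _root_.closedAbsConvexHull 𝕂 (insert 0 s) :=
    (subset_insert 0 s).trans subset_closedAbsConvexHull
  refine (hs.insert 0).closedAbsConvexHull.subset (subset_trans ?_
    (AbsConvex.polar_polar_subset absConvex_convexClosedHull isClosed_closedAbsConvexHull
      (subset_closedAbsConvexHull (mem_insert 0 s))))
  exact LinearMap.polar_antitone _ (LinearMap.polar_antitone _ hs_hull)

theorem StrongDual.exists_isVonNBounded_polar_subset {𝕜 E : Type*} [NontriviallyNormedField 𝕜]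
    [AddCommGroup E] [Module 𝕜 E] [TopologicalSpace E] [ContinuousConstSMul 𝕜 E]
    {V : Set (StrongDual 𝕜 E)} (hV : V ∈ 𝓝 0) :
    ∃ s, IsVonNBounded 𝕜 s ∧ StrongDual.polar 𝕜 s ⊆ V := by
  obtain ⟨⟨s, ε⟩, ⟨hs, hε⟩, hsV⟩ :=
    (ContinuousLinearMap.hasBasis_nhds_zero_of_basis Metric.nhds_basis_closedBall).mem_iff.mp hV
  obtain ⟨c, hc⟩ := NormedField.exists_lt_norm 𝕜 ε⁻¹
  have hcε : 1 < ‖c‖ * ε := by rwa [inv_lt_iff_one_lt_mul₀ hε] at hc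
  refine ⟨(c • ContinuousLinearMap.id 𝕜 E) '' s, hs.image _, fun f hf ↦ hsV fun x hx ↦ ?_⟩
  have hfx := (StrongDual.mem_polar_iff 𝕜 _).mp hf _ (mem_image_of_mem _ hx)
  simp only [smul_apply, ContinuousLinearMap.id_apply, map_smul, smul_eq_mul, norm_mul] at hfx
  exact mem_closedBall_zero_iff.mpr
    (lt_of_mul_lt_mul_left (hfx.trans_lt hcε) (norm_nonneg c)).le

/-- If a locally convex topological vector space `E` is not normable (it has no
bounded zero-neighbourhood), then the evaluation pairing `E'_b × E → 𝕂` on the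
strong dual is discontinuous. -/
theorem eval_pairing_discontinuous_of_not_normable
    (𝕂 : Type*) [RCLike 𝕂] (E : Type*) [AddCommGroup E] [Module 𝕂 E]
    [Module ℝ E] [IsScalarTower ℝ 𝕂 E] [TopologicalSpace E]
    [IsTopologicalAddGroup E] [ContinuousSMul 𝕂 E] [LocallyConvexSpace ℝ E]
    (hE : ¬ ∃ U ∈ nhds (0 : E), Bornology.IsVonNBounded 𝕂 U) :
    ¬ Continuous (fun p : (E →L[𝕂] 𝕂) × E => p.1 p.2) := by
  intro hcont
  obtain ⟨V, hV, U, hU, hVU⟩ :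
      ∃ V ∈ 𝓝 (0 : E →L[𝕂] 𝕂), ∃ U ∈ 𝓝 (0 : E), ∀ f ∈ V, ∀ x ∈ U, ‖f x‖ ≤ 1 := by
    have := hcont.continuousAt (x := (0, 0)) (Metric.closedBall_mem_nhds _ one_pos)
    rw [nhds_prod_eq, mem_map, mem_prod_iff] at this
    obtain ⟨V, hV, U, hU, hVU⟩ := this
    exact ⟨V, hV, U, hU, fun f hf x hx ↦ by simpa using hVU (mk_mem_prod hf hx)⟩
  obtain ⟨S, hS, hSV⟩ := StrongDual.exists_isVonNBounded_polar_subset hV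
  exact hE ⟨U, hU, hS.polar_polar.subset fun x hx f hf ↦ hVU f (hSV hf) x hx⟩
end
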